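/- For all real numbers a, b > 0 with a ≠ b and all v ∈ (0,1), one has a♯_v b ≤ ((1−v)a + v√(ab))^{1−v}·(√(ab)·(1−v) + v b)^{v} ≤ I_v(a,b); that is, a♯_v b ≤ (a∇_v(a♯b))♯_v((a♯b)∇_v b) ≤ I_v(a,b), where a♯b = √(ab). -/

import Mathlib

/-!
Write `g = √(ab)` and `c = a ∇_v b`. The lower bound is weighted AM–GM applied to both factors,
together with `(a ♯_v g) ♯_v (g ♯_v b) = a ♯_v b`. For the upper bound, `I_v(a,b)` factors as
`I(a,c) ♯_v I(c,b)` through the identric mean `I`, because `c` splits `[a,b]` in the ratio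
`v : 1 - v`. Completing a square gives `a ∇_v g ≤ √(ac)` and `g ∇_v b ≤ √(cb)`, and
`√(xy) ≤ I(x,y)` is the inequality between the logarithmic and the arithmetic mean, which comes
from the series `log ((1 + u) / (1 - u)) = 2 ∑ u^(2k+1) / (2k+1)`.
-/

/-- The logarithmic mean of two positive reals. -/
noncomputable def logMean (a b : ℝ) : ℝ :=
  if a = b then a else (b - a) / (Real.log b - Real.log a)

/-- The identric mean of two positive reals. -/
noncomputable def idMean (a b : ℝ) : ℝ :=
  if a = b then a else Real.exp (-1) * (b ^ b / a ^ a) ^ (b - a)⁻¹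

/-- The weighted arithmetic mean `a ∇_v b`. -/
def wArith (v a b : ℝ) : ℝ := (1 - v) * a + v * b

/-- The weighted geometric mean `a ♯_v b`. -/
noncomputable def wGeom (v a b : ℝ) : ℝ := a ^ (1 - v) * b ^ v

/-- The weighted harmonic mean `a !_v b`. -/
noncomputable def wHarm (v a b : ℝ) : ℝ := ((1 - v) / a + v / b)⁻¹

/-- The weighted logarithmic mean `L_v(a,b)` (for `a ≠ b`, `v ∈ (0,1)`). -/
noncomputable def wLog (v a b : ℝ) : ℝ :=
  (1 / (Real.log a - Real.log b)) *
    (((1 - v) / v) * (a - a ^ (1 - v) * b ^ v) + (v / (1 - v)) * (a ^ (1 - v) * b ^ v - b))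

/-- The weighted identric mean `I_v(a,b)` (for `a ≠ b`, `v ∈ (0,1)`). -/
noncomputable def wId (v a b : ℝ) : ℝ :=
  Real.exp (-1) * wArith v a b ^ ((1 - 2 * v) * wArith v a b / (v * (1 - v) * (b - a))) *
    (b ^ (v * b / (1 - v)) / a ^ ((1 - v) * a / v)) ^ (b - a)⁻¹

open Real

theorem two_mul_sq_le_mul_log_sub_log {x : ℝ} (hx : |x| < 1) :
    2 * x ^ 2 ≤ x * (log (1 + x) - log (1 - x)) := by
  have hsum := (hasSum_log_sub_log_of_abs_lt_one hx).mul_left x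
  have hterm : ∀ k : ℕ, 0 ≤ x * (2 * (1 / (2 * k + 1)) * x ^ (2 * k + 1)) := fun k => by
    have hx2 : x * x ^ (2 * k + 1) = (x ^ (k + 1)) ^ 2 := by ring
    rw [mul_left_comm, hx2]
    positivity
  have h0 := le_hasSum hsum 0 fun k _ => hterm k
  norm_num at h0
  linarith

/-- The logarithmic mean is at most the arithmetic mean, with denominators cleared. -/
theorem two_mul_sq_sub_le_mul_log_sub_log {x y : ℝ} (hx : 0 < x) (hy : 0 < y) :
    2 * (y - x) ^ 2 ≤ (y + x) * (y - x) * (log y - log x) := by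
  set u := (y - x) / (y + x) with hu_def
  have hxy : 0 < y + x := by positivity
  have hu : |u| < 1 := by
    rw [abs_div, abs_of_pos hxy, div_lt_one hxy, abs_lt]
    constructor <;> linarith
  have hlog : log (1 + u) - log (1 - u) = log y - log x := by
    have h1 : 1 + u = 2 * y / (y + x) := by rw [hu_def]; field_simp; ring
    have h2 : 1 - u = 2 * x / (y + x) := by rw [hu_def]; field_simp; ring
    rw [h1, h2, log_div (by positivity) hxy.ne', log_div (by positivity) hxy.ne',
      log_mul two_ne_zero hy.ne', log_mul two_ne_zero hx.ne']
    ring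
  have key := two_mul_sq_le_mul_log_sub_log hu
  rw [hlog] at key
  have e1 : 2 * (y - x) ^ 2 = (y + x) ^ 2 * (2 * u ^ 2) := by rw [hu_def]; field_simp
  have e2 : (y + x) * (y - x) * (log y - log x) = (y + x) ^ 2 * (u * (log y - log x)) := by
    rw [hu_def]; field_simp
  rw [e1, e2]
  gcongr

theorem idMean_pos {a b : ℝ} (ha : 0 < a) (hb : 0 < b) : 0 < idMean a b := by
  unfold idMean
  split_ifs <;> positivity

theorem log_idMean {a b : ℝ} (ha : 0 < a) (hb : 0 < b) (hab : a ≠ b) :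
    log (idMean a b) = (b * log b - a * log a) / (b - a) - 1 := by
  rw [idMean, if_neg hab, log_mul (exp_ne_zero _) (by positivity), log_exp,
    log_rpow (by positivity), log_div (by positivity) (by positivity), log_rpow hb, log_rpow ha]
  ring

theorem sqrt_mul_le_idMean {a b : ℝ} (ha : 0 < a) (hb : 0 < b) : √(a * b) ≤ idMean a b := by
  rcases eq_or_ne a b with rfl | hab
  · rw [idMean, if_pos rfl, sqrt_mul_self ha.le]
  rw [← log_le_log_iff (by positivity) (idMean_pos ha hb), log_idMean ha hb hab,
    log_sqrt (by positivity), log_mul ha.ne' hb.ne', ← sub_nonneg]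
  have hba : b - a ≠ 0 := sub_ne_zero.2 hab.symm
  have hdiff : (b * log b - a * log a) / (b - a) - 1 - (log a + log b) / 2 =
      ((b + a) * (b - a) * (log b - log a) - 2 * (b - a) ^ 2) / (2 * (b - a) ^ 2) := by
    field_simp
    ring
  rw [hdiff]
  exact div_nonneg (by linarith [two_mul_sq_sub_le_mul_log_sub_log ha hb]) (by positivity)

section WeightedMeans

variable {v a b : ℝ}

theorem wGeom_pos (ha : 0 < a) (hb : 0 < b) : 0 < wGeom v a b := by
  unfold wGeom
  positivity

theorem log_wGeom (ha : 0 < a) (hb : 0 < b) :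
    log (wGeom v a b) = (1 - v) * log a + v * log b := by
  rw [wGeom, log_mul (by positivity) (by positivity), log_rpow ha, log_rpow hb]

theorem wArith_nonneg (ha : 0 ≤ a) (hb : 0 ≤ b) (hv0 : 0 ≤ v) (hv1 : v ≤ 1) :
    0 ≤ wArith v a b := by
  unfold wArith
  nlinarith

theorem wArith_pos (ha : 0 < a) (hb : 0 < b) (hv0 : 0 ≤ v) (hv1 : v ≤ 1) : 0 < wArith v a b := by
  unfold wArith
  rcases le_total a b with h | h
  · nlinarith [mul_nonneg hv0 (sub_nonneg.2 h)]
  · nlinarith [mul_nonneg (sub_nonneg.2 hv1) (sub_nonneg.2 h)]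

theorem wArith_one_sub_swap : wArith (1 - v) b a = wArith v a b := by
  unfold wArith
  ring

theorem wGeom_le_wArith (ha : 0 ≤ a) (hb : 0 ≤ b) (hv0 : 0 ≤ v) (hv1 : v ≤ 1) :
    wGeom v a b ≤ wArith v a b :=
  geom_mean_le_arith_mean2_weighted (sub_nonneg.2 hv1) hv0 ha hb (by ring)

theorem wGeom_le_wGeom {a' b' : ℝ} (ha : 0 ≤ a) (hb : 0 ≤ b) (haa' : a ≤ a') (hbb' : b ≤ b')
    (hv0 : 0 ≤ v) (hv1 : v ≤ 1) : wGeom v a b ≤ wGeom v a' b' :=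
  mul_le_mul (rpow_le_rpow ha haa' (sub_nonneg.2 hv1)) (rpow_le_rpow hb hbb' hv0)
    (rpow_nonneg hb v) (rpow_nonneg (ha.trans haa') (1 - v))

theorem wGeom_wGeom_sqrt_mul (ha : 0 < a) (hb : 0 < b) :
    wGeom v (wGeom v a √(a * b)) (wGeom v √(a * b) b) = wGeom v a b := by
  have hg : 0 < √(a * b) := by positivity
  rw [← exp_log (wGeom_pos (wGeom_pos ha hg) (wGeom_pos hg hb)), ← exp_log (wGeom_pos ha hb),
    log_wGeom (wGeom_pos ha hg) (wGeom_pos hg hb), log_wGeom ha hg, log_wGeom hg hb,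
    log_wGeom ha hb, log_sqrt (by positivity), log_mul ha.ne' hb.ne']
  ring_nf

theorem wArith_sqrt_mul_le_sqrt_mul_wArith (ha : 0 ≤ a) (hb : 0 ≤ b) (hv0 : 0 ≤ v) (hv1 : v ≤ 1) :
    wArith v a √(a * b) ≤ √(a * wArith v a b) := by
  rw [le_sqrt (wArith_nonneg ha (sqrt_nonneg _) hv0 hv1)
    (mul_nonneg ha (wArith_nonneg ha hb hv0 hv1))]
  unfold wArith
  nlinarith [sq_sqrt (mul_nonneg ha hb),
    mul_nonneg (mul_nonneg hv0 (sub_nonneg.2 hv1)) (sq_nonneg (a - √(a * b)))]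

theorem wArith_sqrt_mul_le_sqrt_wArith_mul (ha : 0 ≤ a) (hb : 0 ≤ b) (hv0 : 0 ≤ v) (hv1 : v ≤ 1) :
    wArith v √(a * b) b ≤ √(wArith v a b * b) := by
  have h := wArith_sqrt_mul_le_sqrt_mul_wArith hb ha (sub_nonneg.2 hv1) (sub_le_self 1 hv0)
  rwa [mul_comm b a, wArith_one_sub_swap, wArith_one_sub_swap, mul_comm b] at h

theorem wId_eq_wGeom_idMean (ha : 0 < a) (hb : 0 < b) (hab : a ≠ b) (hv : v ∈ Set.Ioo 0 1) :
    wId v a b = wGeom v (idMean a (wArith v a b)) (idMean (wArith v a b) b) := by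
  obtain ⟨hv0, hv1⟩ := hv
  have hc := wArith_pos ha hb hv0.le hv1.le
  have hca : wArith v a b - a = v * (b - a) := by unfold wArith; ring
  have hbc : b - wArith v a b = (1 - v) * (b - a) := by unfold wArith; ring
  have hba : b - a ≠ 0 := sub_ne_zero.2 hab.symm
  have hac : a ≠ wArith v a b := fun h => hba (by nlinarith)
  have hcb : wArith v a b ≠ b := fun h => hba (by nlinarith)
  have hI : 0 < wId v a b := by unfold wId; positivity
  rw [← exp_log hI, ← exp_log (wGeom_pos (idMean_pos ha hc) (idMean_pos hc hb))]
  congr 1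
  rw [log_wGeom (idMean_pos ha hc) (idMean_pos hc hb), log_idMean ha hc hac,
    log_idMean hc hb hcb, hca, hbc, wId, log_mul (by positivity) (by positivity),
    log_mul (exp_ne_zero _) (by positivity), log_exp, log_rpow hc, log_rpow (by positivity),
    log_div (by positivity) (by positivity), log_rpow hb, log_rpow ha]
  field_simp
  ring

end WeightedMeans

/-- `a♯_v b ≤ (a∇_v(a♯b)) ♯_v ((a♯b)∇_v b) ≤ I_v(a,b)`, where `a♯b = √(ab)`. -/
theorem wGeom_le_mixed_le_wId (a b v : ℝ) (ha : 0 < a) (hb : 0 < b) (hab : a ≠ b)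
    (hv : v ∈ Set.Ioo (0 : ℝ) 1) :
    wGeom v a b ≤
        ((1 - v) * a + v * Real.sqrt (a * b)) ^ (1 - v) *
          (Real.sqrt (a * b) * (1 - v) + v * b) ^ v ∧
      ((1 - v) * a + v * Real.sqrt (a * b)) ^ (1 - v) *
          (Real.sqrt (a * b) * (1 - v) + v * b) ^ v ≤ wId v a b := by
  obtain ⟨hv0, hv1⟩ := hv
  have hc := wArith_pos ha hb hv0.le hv1.le
  set g := √(a * b)
  have hg : 0 < g := by positivity
  rw [show g * (1 - v) + v * b = wArith v g b by unfold wArith; ring]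
  constructor
  · calc wGeom v a b = wGeom v (wGeom v a g) (wGeom v g b) := (wGeom_wGeom_sqrt_mul ha hb).symm
      _ ≤ wGeom v (wArith v a g) (wArith v g b) :=
        wGeom_le_wGeom (wGeom_pos ha hg).le (wGeom_pos hg hb).le
          (wGeom_le_wArith ha.le hg.le hv0.le hv1.le) (wGeom_le_wArith hg.le hb.le hv0.le hv1.le)
          hv0.le hv1.le
  · rw [wId_eq_wGeom_idMean ha hb hab ⟨hv0, hv1⟩]
    refine wGeom_le_wGeom (wArith_nonneg ha.le hg.le hv0.le hv1.le)
      (wArith_nonneg hg.le hb.le hv0.le hv1.le) ?_ ?_ hv0.le hv1.le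
    · exact (wArith_sqrt_mul_le_sqrt_mul_wArith ha.le hb.le hv0.le hv1.le).trans
        (sqrt_mul_le_idMean ha hc)
    · exact (wArith_sqrt_mul_le_sqrt_wArith_mul ha.le hb.le hv0.le hv1.le).trans
        (sqrt_mul_le_idMean hc hb)
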